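/- arXiv:1808.10129 — 2 statements merged into one kernel-verified Lean document; each statement's English description precedes it below -/
import Mathlib

section
/- If w is a smooth vector field on a connected open set Ω ⊂ ℝ³ with helicity w·(∇×w) nonzero everywhere, and u ∈ C¹(Ω) satisfies ŵ × ∇u = 0 everywhere on Ω (ŵ = w/|w|), then u is constant on Ω. -/
open MeasureTheory Real Set

noncomputable section

abbrev V3 : Type := Fin 3 → ℝ

/-- Euclidean dot product on ℝ³. -/
def dot3 (a b : V3) : ℝ := ∑ i, a i * b i

/-- Euclidean norm on ℝ³. -/
def nrm (a : V3) : ℝ := Real.sqrt (dot3 a a)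

/-- Cross product on ℝ³. -/
def cross3 (a b : V3) : V3 :=
  ![a 1 * b 2 - a 2 * b 1, a 2 * b 0 - a 0 * b 2, a 0 * b 1 - a 1 * b 0]

/-- Partial derivative in the `i`-th coordinate direction. -/
def pd (i : Fin 3) (f : V3 → ℝ) (x : V3) : ℝ := fderiv ℝ f x (Pi.single i 1)

/-- Gradient of a scalar function. -/
def grad3 (f : V3 → ℝ) (x : V3) : V3 := fun i => pd i f x

/-- Curl of a vector field. -/
def curl3 (w : V3 → V3) (x : V3) : V3 :=
  ![pd 1 (fun y => w y 2) x - pd 2 (fun y => w y 1) x,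
    pd 2 (fun y => w y 0) x - pd 0 (fun y => w y 2) x,
    pd 0 (fun y => w y 1) x - pd 1 (fun y => w y 0) x]

/-- Divergence of a vector field. -/
def divg (w : V3 → V3) (x : V3) : ℝ := ∑ i, pd i (fun y => w y i) x

/-- Normalized vector field ŵ = w/|w|. -/
def hatw (w : V3 → V3) (x : V3) : V3 := (nrm (w x))⁻¹ • w x

/-- Orthogonal gradient ∇⊥u = ŵ × (∇u × ŵ). -/
def oGrad (w : V3 → V3) (u : V3 → ℝ) (x : V3) : V3 :=
  cross3 (hatw w x) (cross3 (grad3 u x) (hatw w x))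

open Filter Topology

/-- basis vectors -/
def e3 (i : Fin 3) : V3 := Pi.single i 1

lemma decomp3 (v : V3) : v = v 0 • e3 0 + v 1 • e3 1 + v 2 • e3 2 := by
  funext j; fin_cases j <;> simp [e3]

lemma clm_apply3 (D : V3 →L[ℝ] ℝ) (v : V3) :
    D v = v 0 * D (e3 0) + v 1 * D (e3 1) + v 2 * D (e3 2) := by
  conv_lhs => rw [decomp3 v]
  simp [mul_comm]

lemma clm_ext3 {S T : V3 →L[ℝ] ℝ} (h0 : S (e3 0) = T (e3 0))
    (h1 : S (e3 1) = T (e3 1)) (h2 : S (e3 2) = T (e3 2)) : S = T := by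
  ext v
  rw [clm_apply3 S, clm_apply3 T, h0, h1, h2]

lemma pd_of_hasFDerivAt {g : V3 → ℝ} {Dg : V3 →L[ℝ] ℝ} {x : V3}
    (h : HasFDerivAt g Dg x) (i : Fin 3) : pd i g x = Dg (e3 i) := by
  rw [pd, h.fderiv]; rfl

/-- the mixed linear equiv used for the inverse function theorem -/
def mkL (D : V3 →L[ℝ] ℝ) (hc : D (e3 2) ≠ 0) : V3 ≃ₗ[ℝ] V3 where
  toFun v := ![v 0, v 1, D v]
  invFun y := ![y 0, y 1, (y 2 - (y 0 * D (e3 0) + y 1 * D (e3 1))) / D (e3 2)]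
  map_add' v v' := by
    funext j; fin_cases j <;>
      simp [Matrix.cons_val_zero, Matrix.cons_val_one]
  map_smul' c v := by
    funext j; fin_cases j <;> simp
  left_inv v := by
    funext j; fin_cases j
    · simp
    · simp
    · simp only [Matrix.cons_val_two, Matrix.tail_cons, Matrix.head_cons,
        Matrix.cons_val_zero, Matrix.cons_val_one, Fin.isValue]
      rw [clm_apply3 D v]
      field_simp
      show (v 0 * D (e3 0) + v 1 * D (e3 1) + v 2 * D (e3 2) - (v 0 * D (e3 0) + v 1 * D (e3 1))) / D (e3 2) = v 2
      rw [div_eq_iff hc]; ring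
  right_inv y := by
    funext j; fin_cases j
    · simp
    · simp
    · simp only [Matrix.cons_val_two, Matrix.tail_cons, Matrix.head_cons,
        Matrix.cons_val_zero, Matrix.cons_val_one, Fin.isValue]
      rw [clm_apply3 D]
      simp only [Matrix.cons_val_zero, Matrix.cons_val_one, Matrix.cons_val_two,
        Matrix.tail_cons, Matrix.head_cons]
      field_simp
      show y 0 * D (e3 0) + y 1 * D (e3 1) + (y 2 - (y 0 * D (e3 0) + y 1 * D (e3 1))) = y 2
      ring

def prj (i : Fin 3) : V3 →L[ℝ] ℝ := ContinuousLinearMap.proj i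

@[simp] lemma prj_apply (i : Fin 3) (v : V3) : prj i v = v i := rfl

lemma eventually_differentiableAt {E F : Type*} [NormedAddCommGroup E] [NormedSpace ℝ E]
    [NormedAddCommGroup F] [NormedSpace ℝ F] {f : E → F} {x : E}
    (hf : ContDiffAt ℝ 1 f x) : ∀ᶠ y in 𝓝 x, DifferentiableAt ℝ f y := by
  obtain ⟨U, hU, hfU⟩ := hf.contDiffOn le_rfl (by simp)
  obtain ⟨t, htU, hto, hxt⟩ := mem_nhds_iff.1 hU
  filter_upwards [hto.mem_nhds hxt] with y hy
  exact ((hfU.mono htU).differentiableOn one_ne_zero).differentiableAt (hto.mem_nhds hy)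

lemma pd_eq_fderiv (i : Fin 3) (g : V3 → ℝ) (x : V3) : pd i g x = fderiv ℝ g x (e3 i) := rfl

set_option maxHeartbeats 1000000 in
lemma key (Ω : Set V3) (hΩ : IsOpen Ω)
    (w : V3 → V3) (hw : ContDiffOn ℝ (⊤ : ℕ∞) w Ω)
    (hw0 : ∀ x ∈ Ω, w x ≠ 0)
    (u : V3 → ℝ) (hu : ContDiffOn ℝ 1 u Ω)
    (hcross : ∀ x ∈ Ω, cross3 (w x) (grad3 u x) = 0)
    (x₀ : V3) (hx₀ : x₀ ∈ Ω) (hu2 : pd 2 u x₀ ≠ 0) :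
    dot3 (w x₀) (curl3 w x₀) = 0 := by
  have hΩn : Ω ∈ 𝓝 x₀ := hΩ.mem_nhds hx₀
  have hwA : ∀ x ∈ Ω, ContDiffAt ℝ (⊤ : ℕ∞) w x := fun x hx => hw.contDiffAt (hΩ.mem_nhds hx)
  have huA : ∀ x ∈ Ω, ContDiffAt ℝ 1 u x := fun x hx => hu.contDiffAt (hΩ.mem_nhds hx)
  have hud : ∀ x ∈ Ω, DifferentiableAt ℝ u x := fun x hx => (huA x hx).differentiableAt one_ne_zero
  have hwd : ∀ (i : Fin 3), ∀ x ∈ Ω, DifferentiableAt ℝ (fun y => w y i) x := fun i x hx =>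
    ((contDiffAt_pi.1 (hwA x hx)) i).differentiableAt (by simp)
  -- cross product components
  have hc0 : ∀ x ∈ Ω, w x 1 * pd 2 u x - w x 2 * pd 1 u x = 0 := by
    intro x hx; have := congrFun (hcross x hx) 0; simpa [cross3, grad3] using this
  have hc1 : ∀ x ∈ Ω, w x 2 * pd 0 u x - w x 0 * pd 2 u x = 0 := by
    intro x hx; have := congrFun (hcross x hx) 1; simpa [cross3, grad3] using this
  -- w x₀ 2 ≠ 0
  have hw2x₀ : w x₀ 2 ≠ 0 := by
    intro h
    have h0 : w x₀ 0 = 0 := by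
      have h' := hc1 x₀ hx₀; rw [h] at h'
      have hm : w x₀ 0 * pd 2 u x₀ = 0 := by linarith
      exact (mul_eq_zero.1 hm).resolve_right hu2
    have h1 : w x₀ 1 = 0 := by
      have h' := hc0 x₀ hx₀; rw [h] at h'
      have hm : w x₀ 1 * pd 2 u x₀ = 0 := by linarith
      exact (mul_eq_zero.1 hm).resolve_right hu2
    exact hw0 x₀ hx₀ (by funext j; fin_cases j <;> simp [h0, h1, h])
  -- a, b
  set a : V3 → ℝ := fun x => w x 0 / w x 2 with ha_def
  set b : V3 → ℝ := fun x => w x 1 / w x 2 with hb_def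
  -- continuity facts
  have contW2 : ContinuousAt (fun x => w x 2) x₀ :=
    ((continuous_apply (2 : Fin 3)).continuousAt).comp (hwA x₀ hx₀).continuousAt
  have contU2 : ContinuousAt (fun x => pd 2 u x) x₀ := by
    have hfc : ContinuousOn (fderiv ℝ u) Ω := hu.continuousOn_fderiv_of_isOpen hΩ le_rfl
    have : ContinuousAt (fderiv ℝ u) x₀ := hfc.continuousAt hΩn
    exact ((ContinuousLinearMap.apply ℝ ℝ (e3 2)).continuous.continuousAt).comp this
  -- the good set
  have Egood : ∀ᶠ x in 𝓝 x₀, x ∈ Ω ∧ w x 2 ≠ 0 ∧ pd 2 u x ≠ 0 :=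
    (hΩ.eventually_mem hx₀).and
      ((contW2.eventually_ne hw2x₀).and (contU2.eventually_ne hu2))
  -- relations on the good set
  have hrel : ∀ x, x ∈ Ω → w x 2 ≠ 0 → pd 0 u x = a x * pd 2 u x ∧ pd 1 u x = b x * pd 2 u x := by
    intro x hx hw2
    constructor
    · have := hc1 x hx; show pd 0 u x = w x 0 / w x 2 * pd 2 u x; field_simp; linarith
    · have := hc0 x hx; show pd 1 u x = w x 1 / w x 2 * pd 2 u x; field_simp; linarith
  -- inverse function theorem setup
  set D : V3 →L[ℝ] ℝ := fderiv ℝ u x₀ with hD_def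
  have hD : HasFDerivAt u D x₀ := (hud x₀ hx₀).hasFDerivAt
  have hDe2 : D (e3 2) ≠ 0 := hu2
  set Leq : V3 ≃L[ℝ] V3 := (mkL D hDe2).toContinuousLinearEquiv with hLeq_def
  have hLeq_apply : ∀ v, (Leq : V3 →L[ℝ] V3) v = ![v 0, v 1, D v] := fun v => rfl
  have hLeqv : ∀ v : V3, Leq v = ![v 0, v 1, D v] := fun v => rfl
  set F : V3 → V3 := fun p => ![p 0, p 1, u p] with hF_def
  have hFc : ContDiffAt ℝ 1 F x₀ := by
    apply contDiffAt_pi.2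
    intro i
    fin_cases i
    · exact ((ContinuousLinearMap.proj (R := ℝ) (φ := fun _ : Fin 3 => ℝ) 0).contDiff).contDiffAt
    · exact ((ContinuousLinearMap.proj (R := ℝ) (φ := fun _ : Fin 3 => ℝ) 1).contDiff).contDiffAt
    · exact huA x₀ hx₀
  have hF' : HasFDerivAt F (Leq : V3 →L[ℝ] V3) x₀ := by
    apply hasFDerivAt_pi''
    intro i
    fin_cases i
    · have : (ContinuousLinearMap.proj (R := ℝ) (φ := fun _ : Fin 3 => ℝ) 0).comp
          (Leq : V3 →L[ℝ] V3) = prj 0 := by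
        apply clm_ext3 <;> simp [hLeqv, e3]
      exact this ▸ (prj 0).hasFDerivAt
    · have : (ContinuousLinearMap.proj (R := ℝ) (φ := fun _ : Fin 3 => ℝ) 1).comp
          (Leq : V3 →L[ℝ] V3) = prj 1 := by
        apply clm_ext3 <;> simp [hLeqv, e3]
      exact this ▸ (prj 1).hasFDerivAt
    · have : (ContinuousLinearMap.proj (R := ℝ) (φ := fun _ : Fin 3 => ℝ) 2).comp
          (Leq : V3 →L[ℝ] V3) = D := by
        apply clm_ext3 <;> simp [hLeqv, e3]
      exact this ▸ hD
  have hS : HasStrictFDerivAt F ((Leq : V3 ≃L[ℝ] V3) : V3 →L[ℝ] V3) x₀ :=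
    hFc.hasStrictFDerivAt' hF' one_ne_zero
  set G : V3 → V3 := hS.localInverse F Leq x₀ with hG_def
  have hG : ContDiffAt ℝ 1 G (F x₀) := hFc.to_localInverse hF' one_ne_zero
  have hFG : ∀ᶠ y in 𝓝 (F x₀), F (G y) = y := hS.eventually_right_inverse
  have hGx₀ : G (F x₀) = x₀ := hS.localInverse_apply_image
  have hGd : ∀ᶠ y in 𝓝 (F x₀), DifferentiableAt ℝ G y := eventually_differentiableAt hG
  -- the implicit surface
  set C : ℝ := u x₀ with hC_def
  set J : V3 → V3 := fun q => ![q 0, q 1, C] with hJ_def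
  have hJx₀ : J x₀ = F x₀ := by funext j; fin_cases j <;> simp [hJ_def, hF_def, hC_def]
  have hJcd : ContDiff ℝ (⊤ : ℕ∞) J := by
    apply contDiff_pi.2
    intro i
    fin_cases i
    · exact ((ContinuousLinearMap.proj (R := ℝ) (φ := fun _ : Fin 3 => ℝ) 0).contDiff)
    · exact ((ContinuousLinearMap.proj (R := ℝ) (φ := fun _ : Fin 3 => ℝ) 1).contDiff)
    · exact contDiff_const
  have hJten : Tendsto J (𝓝 x₀) (𝓝 (F x₀)) := by
    rw [← hJx₀]; exact hJcd.continuous.continuousAt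
  set f : V3 → ℝ := fun q => G (J q) 2 with hf_def
  set Φ : V3 → V3 := fun q => ![q 0, q 1, f q] with hΦ_def
  have hf1 : ContDiffAt ℝ 1 f x₀ := by
    have hGJ : ContDiffAt ℝ 1 (fun q => G (J q)) x₀ := by
      apply ContDiffAt.comp (g := G) (f := J) x₀ (by rwa [hJx₀])
        (hJcd.contDiffAt.of_le (by simp))
    exact contDiffAt_pi.1 hGJ 2
  have hΦ1 : ContDiffAt ℝ 1 Φ x₀ := by
    apply contDiffAt_pi.2
    intro i
    fin_cases i
    · exact ((ContinuousLinearMap.proj (R := ℝ) (φ := fun _ : Fin 3 => ℝ) 0).contDiff).contDiffAt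
    · exact ((ContinuousLinearMap.proj (R := ℝ) (φ := fun _ : Fin 3 => ℝ) 1).contDiff).contDiffAt
    · exact hf1
  have hΦG : ∀ᶠ q in 𝓝 x₀, G (J q) = Φ q ∧ u (Φ q) = C := by
    filter_upwards [hJten.eventually hFG] with q hq
    have h0 : G (J q) 0 = q 0 := by
      have := congrFun hq 0; simpa [hF_def, hJ_def] using this
    have h1 : G (J q) 1 = q 1 := by
      have := congrFun hq 1; simpa [hF_def, hJ_def] using this
    have h2 : u (G (J q)) = C := by
      have := congrFun hq 2; simpa [hF_def, hJ_def] using this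
    have hGJq : G (J q) = Φ q := by
      funext j; fin_cases j
      · simpa [hΦ_def] using h0
      · simpa [hΦ_def] using h1
      · simp [hΦ_def, hf_def]
    rw [← hGJq]
    exact ⟨rfl, h2⟩
  have hΦx₀ : Φ x₀ = x₀ := by
    have h := (hΦG.self_of_nhds).1
    rw [← h, hJx₀, hGx₀]
  have hfd : ∀ᶠ q in 𝓝 x₀, DifferentiableAt ℝ f q := eventually_differentiableAt hf1
  have hΦcont : ContinuousAt Φ x₀ := hΦ1.continuousAt
  have hΦten : Tendsto Φ (𝓝 x₀) (𝓝 x₀) := by rw [← hΦx₀] at hΦcont ⊢; exact hΦcont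
  -- the derivative of f
  set f' : V3 → (V3 →L[ℝ] ℝ) := fun q => (-(a (Φ q))) • prj 0 + (-(b (Φ q))) • prj 1
    with hf'_def
  have hf'e : ∀ q, (f' q (e3 0) = -(a (Φ q)) ∧ f' q (e3 1) = -(b (Φ q))) ∧ f' q (e3 2) = 0 := by
    intro q
    refine ⟨⟨?_, ?_⟩, ?_⟩ <;> simp [hf'_def, e3]
  have hmain : ∀ᶠ q in 𝓝 x₀, HasFDerivAt f (f' q) q := by
    filter_upwards [hfd, hΦten.eventually Egood, hΦG.eventually_nhds,
      hJten.eventually hGd] with q hfq hPq hnq hGdq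
    obtain ⟨hΩq, hw2q, hu2q⟩ := hPq
    set Df : V3 →L[ℝ] ℝ := fderiv ℝ f q with hDf_def
    have hDfq : HasFDerivAt f Df q := hfq.hasFDerivAt
    set Φq' : V3 →L[ℝ] V3 := ContinuousLinearMap.pi ![prj 0, prj 1, Df] with hΦq'_def
    have hΦ'q : HasFDerivAt Φ Φq' q := by
      apply hasFDerivAt_pi''
      intro i
      fin_cases i
      · have h : (ContinuousLinearMap.proj (R := ℝ) (φ := fun _ : Fin 3 => ℝ) 0).comp Φq'
            = prj 0 := ContinuousLinearMap.proj_pi _ _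
        exact h ▸ (prj 0).hasFDerivAt
      · have h : (ContinuousLinearMap.proj (R := ℝ) (φ := fun _ : Fin 3 => ℝ) 1).comp Φq'
            = prj 1 := ContinuousLinearMap.proj_pi _ _
        exact h ▸ (prj 1).hasFDerivAt
      · have h : (ContinuousLinearMap.proj (R := ℝ) (φ := fun _ : Fin 3 => ℝ) 2).comp Φq'
            = Df := ContinuousLinearMap.proj_pi _ _
        exact h ▸ hDfq
    set Du : V3 →L[ℝ] ℝ := fderiv ℝ u (Φ q) with hDu_def
    have huΦ : HasFDerivAt (fun p => u (Φ p)) (Du.comp Φq') q :=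
      ((hud _ hΩq).hasFDerivAt).comp q hΦ'q
    have hconstq : (fun p => u (Φ p)) =ᶠ[𝓝 q] fun _ => C := hnq.mono (fun p hp => hp.2)
    have hzero : Du.comp Φq' = 0 := by
      have h0 : HasFDerivAt (fun p => u (Φ p)) 0 q :=
        (hasFDerivAt_const (𝕜 := ℝ) C q).congr_of_eventuallyEq hconstq
      exact huΦ.unique h0
    have hΦ'e : ∀ i : Fin 3, Φq' (e3 i) = ![e3 i 0, e3 i 1, Df (e3 i)] := by
      intro i; funext j; fin_cases j <;>
        simp [hΦq'_def, ContinuousLinearMap.pi_apply]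
    have hpdu : ∀ i : Fin 3, Du (e3 i) = pd i u (Φ q) := fun i => rfl
    have hval : ∀ i : Fin 3, Du (Φq' (e3 i)) = 0 := by
      intro i
      have h := DFunLike.congr_fun hzero (e3 i)
      simpa using h
    have hv0 : pd 0 u (Φ q) + Df (e3 0) * pd 2 u (Φ q) = 0 := by
      have h := hval 0
      rw [hΦ'e 0, clm_apply3] at h
      rw [hpdu 0, hpdu 1, hpdu 2] at h
      simpa [e3, hpdu] using h
    have hv1 : pd 1 u (Φ q) + Df (e3 1) * pd 2 u (Φ q) = 0 := by
      have h := hval 1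
      rw [hΦ'e 1, clm_apply3] at h
      rw [hpdu 0, hpdu 1, hpdu 2] at h
      simpa [e3, hpdu] using h
    have hrq := hrel (Φ q) hΩq hw2q
    have hDf0 : Df (e3 0) = -(a (Φ q)) := by
      have := hv0; rw [hrq.1] at this
      have h' : (a (Φ q) + Df (e3 0)) * pd 2 u (Φ q) = 0 := by ring_nf; ring_nf at this; linarith
      have := (mul_eq_zero.1 h').resolve_right hu2q
      linarith
    have hDf1 : Df (e3 1) = -(b (Φ q)) := by
      have := hv1; rw [hrq.2] at this
      have h' : (b (Φ q) + Df (e3 1)) * pd 2 u (Φ q) = 0 := by ring_nf; ring_nf at this; linarith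
      have := (mul_eq_zero.1 h').resolve_right hu2q
      linarith
    -- pd 2 f q = 0
    have hJ'q : HasFDerivAt J (ContinuousLinearMap.pi ![prj 0, prj 1, 0]) q := by
      apply hasFDerivAt_pi''
      intro i
      fin_cases i
      · have h : (ContinuousLinearMap.proj (R := ℝ) (φ := fun _ : Fin 3 => ℝ) 0).comp
            (ContinuousLinearMap.pi ![prj 0, prj 1, 0]) = prj 0 := ContinuousLinearMap.proj_pi _ _
        exact h ▸ (prj 0).hasFDerivAt
      · have h : (ContinuousLinearMap.proj (R := ℝ) (φ := fun _ : Fin 3 => ℝ) 1).comp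
            (ContinuousLinearMap.pi ![prj 0, prj 1, 0]) = prj 1 := ContinuousLinearMap.proj_pi _ _
        exact h ▸ (prj 1).hasFDerivAt
      · have h : (ContinuousLinearMap.proj (R := ℝ) (φ := fun _ : Fin 3 => ℝ) 2).comp
            (ContinuousLinearMap.pi ![prj 0, prj 1, 0]) = 0 := ContinuousLinearMap.proj_pi _ _
        exact h ▸ hasFDerivAt_const C q
    have hGJd : HasFDerivAt (fun p => G (J p))
        ((fderiv ℝ G (J q)).comp (ContinuousLinearMap.pi ![prj 0, prj 1, 0])) q :=
      (hGdq.hasFDerivAt).comp q hJ'q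
    have hf2' : HasFDerivAt f ((ContinuousLinearMap.proj (R := ℝ) (φ := fun _ : Fin 3 => ℝ) 2).comp
        ((fderiv ℝ G (J q)).comp (ContinuousLinearMap.pi ![prj 0, prj 1, 0]))) q :=
      (hasFDerivAt_pi'.1 hGJd) 2
    have hDf2 : Df (e3 2) = 0 := by
      have hEq := hDfq.unique hf2'
      rw [hEq]
      have hz : (ContinuousLinearMap.pi (R := ℝ) ![prj 0, prj 1, 0]) (e3 2) = 0 := by
        funext j; fin_cases j <;> simp [ContinuousLinearMap.pi_apply, e3]
      simp [ContinuousLinearMap.comp_apply, hz]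
    have hDff' : Df = f' q := by
      apply clm_ext3
      · rw [hDf0, (hf'e q).1.1]
      · rw [hDf1, (hf'e q).1.2]
      · rw [hDf2, (hf'e q).2]
    exact hDff' ▸ hDfq
  -- smoothness of a, b at x₀
  have haC : ContDiffAt ℝ 1 a x₀ :=
    (((contDiffAt_pi.1 (hwA x₀ hx₀)) 0).div ((contDiffAt_pi.1 (hwA x₀ hx₀)) 2) hw2x₀).of_le
      (by simp)
  have hbC : ContDiffAt ℝ 1 b x₀ :=
    (((contDiffAt_pi.1 (hwA x₀ hx₀)) 1).div ((contDiffAt_pi.1 (hwA x₀ hx₀)) 2) hw2x₀).of_le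
      (by simp)
  have haΦ : ContDiffAt ℝ 1 (fun q => a (Φ q)) x₀ :=
    ContDiffAt.comp (g := a) x₀ (by rw [hΦx₀]; exact haC) hΦ1
  have hbΦ : ContDiffAt ℝ 1 (fun q => b (Φ q)) x₀ :=
    ContDiffAt.comp (g := b) x₀ (by rw [hΦx₀]; exact hbC) hΦ1
  have hf'd : DifferentiableAt ℝ f' x₀ := by
    apply DifferentiableAt.add
    · exact ((haΦ.differentiableAt one_ne_zero).neg).smul_const (prj 0)
    · exact ((hbΦ.differentiableAt one_ne_zero).neg).smul_const (prj 1)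
  set f'' : V3 →L[ℝ] (V3 →L[ℝ] ℝ) := fderiv ℝ f' x₀ with hf''_def
  have hf''h : HasFDerivAt f' f'' x₀ := hf'd.hasFDerivAt
  have hsymm := second_derivative_symmetric_of_eventually hmain hf''h (e3 0) (e3 1)
  -- the derivative of Φ at x₀
  set Φ₀' : V3 →L[ℝ] V3 := ContinuousLinearMap.pi ![prj 0, prj 1, f' x₀] with hΦ₀'_def
  have hfx₀' : HasFDerivAt f (f' x₀) x₀ := hmain.self_of_nhds
  have hΦ'x₀ : HasFDerivAt Φ Φ₀' x₀ := by
    apply hasFDerivAt_pi''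
    intro i
    fin_cases i
    · have h : (ContinuousLinearMap.proj (R := ℝ) (φ := fun _ : Fin 3 => ℝ) 0).comp Φ₀'
          = prj 0 := ContinuousLinearMap.proj_pi _ _
      exact h ▸ (prj 0).hasFDerivAt
    · have h : (ContinuousLinearMap.proj (R := ℝ) (φ := fun _ : Fin 3 => ℝ) 1).comp Φ₀'
          = prj 1 := ContinuousLinearMap.proj_pi _ _
      exact h ▸ (prj 1).hasFDerivAt
    · have h : (ContinuousLinearMap.proj (R := ℝ) (φ := fun _ : Fin 3 => ℝ) 2).comp Φ₀'
          = f' x₀ := ContinuousLinearMap.proj_pi _ _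
      exact h ▸ hfx₀'
  have hΦ₀'e : ∀ i : Fin 3, Φ₀' (e3 i) = ![e3 i 0, e3 i 1, f' x₀ (e3 i)] := by
    intro i; funext j; fin_cases j <;>
      simp [hΦ₀'_def, ContinuousLinearMap.pi_apply]
  set Da : V3 →L[ℝ] ℝ := fderiv ℝ a x₀ with hDa_def
  set Db : V3 →L[ℝ] ℝ := fderiv ℝ b x₀ with hDb_def
  have hax : HasFDerivAt a Da x₀ := (haC.differentiableAt one_ne_zero).hasFDerivAt
  have hbx : HasFDerivAt b Db x₀ := (hbC.differentiableAt one_ne_zero).hasFDerivAt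
  -- identify f'' (e3 1) (e3 0)
  have hid0 : (ContinuousLinearMap.apply ℝ ℝ (e3 0)).comp f'' = -(Da.comp Φ₀') := by
    have hA : HasFDerivAt (fun q => f' q (e3 0))
        ((ContinuousLinearMap.apply ℝ ℝ (e3 0)).comp f'') x₀ :=
      ((ContinuousLinearMap.apply ℝ ℝ (e3 0)).hasFDerivAt).comp x₀ hf''h
    have hB : HasFDerivAt (fun q => -(a (Φ q))) (-(Da.comp Φ₀')) x₀ := by
      have h1 : HasFDerivAt (a ∘ Φ) (Da.comp Φ₀') x₀ :=
        HasFDerivAt.comp x₀ (show HasFDerivAt a Da (Φ x₀) from hΦx₀.symm ▸ hax) hΦ'x₀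
      exact h1.neg
    have hBe : HasFDerivAt (fun q => f' q (e3 0)) (-(Da.comp Φ₀')) x₀ := by
      apply hB.congr_of_eventuallyEq
      exact Filter.Eventually.of_forall (fun q => ((hf'e q).1.1))
    exact hA.unique hBe
  have hid1 : (ContinuousLinearMap.apply ℝ ℝ (e3 1)).comp f'' = -(Db.comp Φ₀') := by
    have hA : HasFDerivAt (fun q => f' q (e3 1))
        ((ContinuousLinearMap.apply ℝ ℝ (e3 1)).comp f'') x₀ :=
      ((ContinuousLinearMap.apply ℝ ℝ (e3 1)).hasFDerivAt).comp x₀ hf''h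
    have hB : HasFDerivAt (fun q => -(b (Φ q))) (-(Db.comp Φ₀')) x₀ := by
      have h1 : HasFDerivAt (b ∘ Φ) (Db.comp Φ₀') x₀ :=
        HasFDerivAt.comp x₀ (show HasFDerivAt b Db (Φ x₀) from hΦx₀.symm ▸ hbx) hΦ'x₀
      exact h1.neg
    have hBe : HasFDerivAt (fun q => f' q (e3 1)) (-(Db.comp Φ₀')) x₀ := by
      apply hB.congr_of_eventuallyEq
      exact Filter.Eventually.of_forall (fun q => ((hf'e q).1.2))
    exact hA.unique hBe
  have hfx₀e : (f' x₀ (e3 0) = -(a x₀) ∧ f' x₀ (e3 1) = -(b x₀)) ∧ f' x₀ (e3 2) = 0 := by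
    have := hf'e x₀; rwa [hΦx₀] at this
  have hpa : ∀ i : Fin 3, Da (e3 i) = pd i a x₀ := fun i => rfl
  have hpb : ∀ i : Fin 3, Db (e3 i) = pd i b x₀ := fun i => rfl
  have heq1 : f'' (e3 1) (e3 0) = -(pd 1 a x₀ - b x₀ * pd 2 a x₀) := by
    have h := DFunLike.congr_fun hid0 (e3 1)
    simp only [ContinuousLinearMap.comp_apply, ContinuousLinearMap.neg_apply,
      ContinuousLinearMap.apply_apply] at h
    rw [h, hΦ₀'e 1, clm_apply3]
    simp only [Matrix.cons_val_zero, Matrix.cons_val_one, Matrix.head_cons,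
      Matrix.cons_val_two, Matrix.tail_cons]
    rw [hpa 0, hpa 1, hpa 2, hfx₀e.1.2]
    have h0 : e3 1 0 = 0 := by simp [e3]
    have h1 : e3 1 1 = 1 := by simp [e3]
    rw [h0, h1]; ring
  have heq2 : f'' (e3 0) (e3 1) = -(pd 0 b x₀ - a x₀ * pd 2 b x₀) := by
    have h := DFunLike.congr_fun hid1 (e3 0)
    simp only [ContinuousLinearMap.comp_apply, ContinuousLinearMap.neg_apply,
      ContinuousLinearMap.apply_apply] at h
    rw [h, hΦ₀'e 0, clm_apply3]
    simp only [Matrix.cons_val_zero, Matrix.cons_val_one, Matrix.head_cons,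
      Matrix.cons_val_two, Matrix.tail_cons]
    rw [hpb 0, hpb 1, hpb 2, hfx₀e.1.1]
    have h0 : e3 0 0 = 1 := by simp [e3]
    have h1 : e3 0 1 = 0 := by simp [e3]
    rw [h0, h1]; ring
  have eqn : pd 1 a x₀ - b x₀ * pd 2 a x₀ = pd 0 b x₀ - a x₀ * pd 2 b x₀ := by
    have := hsymm
    rw [heq1, heq2] at this
    linarith
  -- quotient rule for a and b
  set D0 : V3 →L[ℝ] ℝ := fderiv ℝ (fun y => w y 0) x₀ with hD0_def
  set D1 : V3 →L[ℝ] ℝ := fderiv ℝ (fun y => w y 1) x₀ with hD1_def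
  set D2 : V3 →L[ℝ] ℝ := fderiv ℝ (fun y => w y 2) x₀ with hD2_def
  have hw0' : HasFDerivAt (fun y => w y 0) D0 x₀ := (hwd 0 x₀ hx₀).hasFDerivAt
  have hw1' : HasFDerivAt (fun y => w y 1) D1 x₀ := (hwd 1 x₀ hx₀).hasFDerivAt
  have hw2' : HasFDerivAt (fun y => w y 2) D2 x₀ := (hwd 2 x₀ hx₀).hasFDerivAt
  have hinv : HasFDerivAt (fun y => (w y 2)⁻¹) ((-(w x₀ 2 ^ 2)⁻¹) • D2) x₀ :=
    HasDerivAt.comp_hasFDerivAt x₀ (hasDerivAt_inv hw2x₀) hw2'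
  have hamul : HasFDerivAt (fun y => w y 0 * (w y 2)⁻¹)
      (w x₀ 0 • ((-(w x₀ 2 ^ 2)⁻¹) • D2) + (w x₀ 2)⁻¹ • D0) x₀ := hw0'.mul hinv
  have hbmul : HasFDerivAt (fun y => w y 1 * (w y 2)⁻¹)
      (w x₀ 1 • ((-(w x₀ 2 ^ 2)⁻¹) • D2) + (w x₀ 2)⁻¹ • D1) x₀ := hw1'.mul hinv
  have hauq : HasFDerivAt a (w x₀ 0 • ((-(w x₀ 2 ^ 2)⁻¹) • D2) + (w x₀ 2)⁻¹ • D0) x₀ := by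
    have : a = fun y => w y 0 * (w y 2)⁻¹ := by
      funext y; rw [ha_def]; exact div_eq_mul_inv _ _
    rw [this]; exact hamul
  have hbuq : HasFDerivAt b (w x₀ 1 • ((-(w x₀ 2 ^ 2)⁻¹) • D2) + (w x₀ 2)⁻¹ • D1) x₀ := by
    have : b = fun y => w y 1 * (w y 2)⁻¹ := by
      funext y; rw [hb_def]; exact div_eq_mul_inv _ _
    rw [this]; exact hbmul
  have hDa_eq : Da = w x₀ 0 • ((-(w x₀ 2 ^ 2)⁻¹) • D2) + (w x₀ 2)⁻¹ • D0 := hax.unique hauq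
  have hDb_eq : Db = w x₀ 1 • ((-(w x₀ 2 ^ 2)⁻¹) • D2) + (w x₀ 2)⁻¹ • D1 := hbx.unique hbuq
  have hPa : ∀ j : Fin 3, pd j a x₀ =
      (1 / w x₀ 2) * pd j (fun y => w y 0) x₀ - (w x₀ 0 / w x₀ 2 ^ 2) * pd j (fun y => w y 2) x₀ := by
    intro j
    have h0 : D0 (e3 j) = pd j (fun y => w y 0) x₀ := rfl
    have h2 : D2 (e3 j) = pd j (fun y => w y 2) x₀ := rfl
    rw [← hpa j, hDa_eq]
    rw [ContinuousLinearMap.add_apply, ContinuousLinearMap.smul_apply,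
      ContinuousLinearMap.smul_apply, ContinuousLinearMap.smul_apply, h0, h2]
    simp only [smul_eq_mul]
    field_simp
    ring
  have hPb : ∀ j : Fin 3, pd j b x₀ =
      (1 / w x₀ 2) * pd j (fun y => w y 1) x₀ - (w x₀ 1 / w x₀ 2 ^ 2) * pd j (fun y => w y 2) x₀ := by
    intro j
    have h1 : D1 (e3 j) = pd j (fun y => w y 1) x₀ := rfl
    have h2 : D2 (e3 j) = pd j (fun y => w y 2) x₀ := rfl
    rw [← hpb j, hDb_eq]
    rw [ContinuousLinearMap.add_apply, ContinuousLinearMap.smul_apply,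
      ContinuousLinearMap.smul_apply, ContinuousLinearMap.smul_apply, h1, h2]
    simp only [smul_eq_mul]
    field_simp
    ring
  have hax₀ : a x₀ = w x₀ 0 / w x₀ 2 := rfl
  have hbx₀ : b x₀ = w x₀ 1 / w x₀ 2 := rfl
  have E := eqn
  rw [hPa 1, hPa 2, hPb 0, hPb 2, hax₀, hbx₀] at E
  field_simp at E
  -- conclude
  have c0 : curl3 w x₀ 0 = pd 1 (fun y => w y 2) x₀ - pd 2 (fun y => w y 1) x₀ := rfl
  have c1 : curl3 w x₀ 1 = pd 2 (fun y => w y 0) x₀ - pd 0 (fun y => w y 2) x₀ := rfl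
  have c2 : curl3 w x₀ 2 = pd 0 (fun y => w y 1) x₀ - pd 1 (fun y => w y 0) x₀ := rfl
  rw [dot3, Fin.sum_univ_three, c0, c1, c2]
  have h2 : (w x₀ 2) ^ 5 * (w x₀ 0 * (pd 1 (fun y => w y 2) x₀ - pd 2 (fun y => w y 1) x₀) +
      w x₀ 1 * (pd 2 (fun y => w y 0) x₀ - pd 0 (fun y => w y 2) x₀) +
      w x₀ 2 * (pd 0 (fun y => w y 1) x₀ - pd 1 (fun y => w y 0) x₀)) = 0 := by
    linear_combination (-(w x₀ 2) ^ 4) * E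
  exact (mul_eq_zero.1 h2).resolve_left (pow_ne_zero 5 hw2x₀)

def shf (s : Fin 3) : V3 → V3 := fun v i => v (i + s)
def shL (s : Fin 3) : V3 →L[ℝ] V3 :=
  ContinuousLinearMap.pi (fun i => ContinuousLinearMap.proj (i + s))

lemma shL_eq (s : Fin 3) : ⇑(shL s) = shf s := rfl

lemma shf_shf (s t : Fin 3) (v : V3) : shf s (shf t v) = shf (s + t) v := by
  funext i; simp [shf, add_assoc]

lemma shf_zero (v : V3) : shf 0 v = v := by funext i; simp [shf]

lemma shf_contDiff (s : Fin 3) : ContDiff ℝ (⊤ : ℕ∞) (shf s) := by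
  rw [← shL_eq]; exact (shL s).contDiff

lemma shf_hasFDerivAt (s : Fin 3) (x : V3) : HasFDerivAt (shf s) (shL s) x := by
  rw [← shL_eq]; exact (shL s).hasFDerivAt

lemma shf_eq_zero {s : Fin 3} {v : V3} (h : shf s v = 0) : v = 0 := by
  funext j
  have := congrFun h (j - s)
  simpa [shf, sub_add_cancel] using this

lemma shf_single (s i : Fin 3) : shf s (e3 i) = e3 (i - s) := by
  funext j
  simp only [shf, e3, Pi.single_apply]
  congr 1
  simp only [eq_iff_iff]
  rw [eq_sub_iff_add_eq]

lemma dot3_shf (t : Fin 3) (a b : V3) : dot3 (shf t a) (shf t b) = dot3 a b := by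
  fin_cases t <;> simp [dot3, shf, Fin.sum_univ_three] <;> ring_nf

lemma cross3_shf (t : Fin 3) (a b : V3) : cross3 (shf t a) (shf t b) = shf t (cross3 a b) := by
  fin_cases t <;> (funext j; fin_cases j) <;> simp [cross3, shf] <;> ring

lemma pd_shf (s i : Fin 3) (g : V3 → ℝ) (x : V3) (hg : DifferentiableAt ℝ g (shf s x)) :
    pd i (fun y => g (shf s y)) x = pd (i - s) g (shf s x) := by
  have hcomp : HasFDerivAt (fun y => g (shf s y))
      ((fderiv ℝ g (shf s x)).comp (shL s)) x :=
    HasFDerivAt.comp x hg.hasFDerivAt (shf_hasFDerivAt s x)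
  have h1 : pd i (fun y => g (shf s y)) x = ((fderiv ℝ g (shf s x)).comp (shL s)) (e3 i) := by
    rw [pd, hcomp.fderiv]; rfl
  rw [h1, ContinuousLinearMap.comp_apply]
  have h2 : (shL s) (e3 i) = e3 (i - s) := by rw [show ⇑(shL s) = shf s from rfl, shf_single]
  rw [h2]; rfl

lemma curl3_shf (s : Fin 3) (w : V3 → V3) (x : V3)
    (hd : ∀ m : Fin 3, DifferentiableAt ℝ (fun z => w z m) (shf s x)) :
    curl3 (fun y => shf (-s) (w (shf s y))) x = shf (-s) (curl3 w (shf s x)) := by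
  have hpdw : ∀ m j : Fin 3, pd j (fun y => (shf (-s) (w (shf s y)))  m) x
      = pd (j - s) (fun z => w z (m + -s)) (shf s x) := by
    intro m j
    have : (fun y => (shf (-s) (w (shf s y))) m) = fun y => (fun z => w z (m + -s)) (shf s y) := by
      funext y; rfl
    rw [this]
    exact pd_shf s j _ x (hd (m + -s))
  funext j
  fin_cases j
  · calc curl3 (fun y => shf (-s) (w (shf s y))) x 0
        = pd 1 (fun y => (shf (-s) (w (shf s y))) 2) x
          - pd 2 (fun y => (shf (-s) (w (shf s y))) 1) x := rfl
      _ = pd (1 - s) (fun z => w z (2 + -s)) (shf s x)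
          - pd (2 - s) (fun z => w z (1 + -s)) (shf s x) := by rw [hpdw, hpdw]
      _ = shf (-s) (curl3 w (shf s x)) 0 := by
          show _ = curl3 w (shf s x) (0 + -s)
          fin_cases s <;> rfl
  · calc curl3 (fun y => shf (-s) (w (shf s y))) x 1
        = pd 2 (fun y => (shf (-s) (w (shf s y))) 0) x
          - pd 0 (fun y => (shf (-s) (w (shf s y))) 2) x := rfl
      _ = pd (2 - s) (fun z => w z (0 + -s)) (shf s x)
          - pd (0 - s) (fun z => w z (2 + -s)) (shf s x) := by rw [hpdw, hpdw]
      _ = shf (-s) (curl3 w (shf s x)) 1 := by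
          show _ = curl3 w (shf s x) (1 + -s)
          fin_cases s <;> rfl
  · calc curl3 (fun y => shf (-s) (w (shf s y))) x 2
        = pd 0 (fun y => (shf (-s) (w (shf s y))) 1) x
          - pd 1 (fun y => (shf (-s) (w (shf s y))) 0) x := rfl
      _ = pd (0 - s) (fun z => w z (1 + -s)) (shf s x)
          - pd (1 - s) (fun z => w z (0 + -s)) (shf s x) := by rw [hpdw, hpdw]
      _ = shf (-s) (curl3 w (shf s x)) 2 := by
          show _ = curl3 w (shf s x) (2 + -s)
          fin_cases s <;> rfl



set_option maxHeartbeats 1000000 in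
/-- if `w` is smooth, non-vanishing and has nowhere-zero helicity on a
connected open set `Ω`, and `u ∈ C¹(Ω)` satisfies `ŵ × ∇u = 0` on `Ω`, then `u` is
constant on `Ω`. -/
theorem constant_of_orthogonal_gradient_vanishes
    (Ω : Set V3) (hΩ : IsOpen Ω) (hconn : IsConnected Ω)
    (w : V3 → V3) (hw : ContDiffOn ℝ (⊤ : ℕ∞) w Ω)
    (hw0 : ∀ x ∈ Ω, w x ≠ 0)
    (hhel : ∀ x ∈ Ω, dot3 (w x) (curl3 w x) ≠ 0)
    (u : V3 → ℝ) (hu : ContDiffOn ℝ 1 u Ω)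
    (hperp : ∀ x ∈ Ω, cross3 (hatw w x) (grad3 u x) = 0) :
    ∃ c : ℝ, ∀ x ∈ Ω, u x = c := by
  have hud : ∀ x ∈ Ω, DifferentiableAt ℝ u x := fun x hx =>
    (hu.contDiffAt (hΩ.mem_nhds hx)).differentiableAt one_ne_zero
  have hwd : ∀ (i : Fin 3), ∀ x ∈ Ω, DifferentiableAt ℝ (fun y => w y i) x := fun i x hx =>
    ((contDiffAt_pi.1 (hw.contDiffAt (hΩ.mem_nhds hx))) i).differentiableAt (by simp)
  -- from hperp to plain cross product vanishing
  have hcross : ∀ x ∈ Ω, cross3 (w x) (grad3 u x) = 0 := by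
    intro x hx
    have hnrm : nrm (w x) ≠ 0 := by
      have hpos : 0 < dot3 (w x) (w x) := by
        rcases (show 0 ≤ dot3 (w x) (w x) by
            rw [dot3, Fin.sum_univ_three]
            have h0 := mul_self_nonneg (w x 0)
            have h1 := mul_self_nonneg (w x 1)
            have h2 := mul_self_nonneg (w x 2)
            linarith).lt_or_eq with h | h
        · exact h
        · exfalso
          apply hw0 x hx
          rw [dot3, Fin.sum_univ_three] at h
          have h0 : w x 0 = 0 := mul_self_eq_zero.1 (by
            nlinarith [mul_self_nonneg (w x 1), mul_self_nonneg (w x 2)])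
          have h1 : w x 1 = 0 := mul_self_eq_zero.1 (by
            nlinarith [mul_self_nonneg (w x 0), mul_self_nonneg (w x 2)])
          have h2 : w x 2 = 0 := mul_self_eq_zero.1 (by
            nlinarith [mul_self_nonneg (w x 0), mul_self_nonneg (w x 1)])
          funext j
          fin_cases j <;> simp [h0, h1, h2]
      exact ne_of_gt (Real.sqrt_pos.2 hpos)
    have h := hperp x hx
    rw [hatw] at h
    have hsm : cross3 ((nrm (w x))⁻¹ • w x) (grad3 u x)
        = (nrm (w x))⁻¹ • cross3 (w x) (grad3 u x) := by
      funext j; fin_cases j <;> simp [cross3] <;> ring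
    rw [hsm] at h
    rcases smul_eq_zero.1 h with h' | h'
    · exact absurd h' (inv_ne_zero hnrm)
    · exact h'
  -- all partial derivatives of u vanish on Ω
  have hpd : ∀ x ∈ Ω, ∀ i : Fin 3, pd i u x = 0 := by
    intro x hx i
    by_contra hne
    set s : Fin 3 := 2 - i with hs_def
    have hTx' : shf s (shf (-s) x) = x := by rw [shf_shf, add_neg_cancel, shf_zero]
    have hΩ'o : IsOpen (shf s ⁻¹' Ω) := hΩ.preimage (shf_contDiff s).continuous
    have hx'Ω : shf (-s) x ∈ shf s ⁻¹' Ω := by rw [mem_preimage, hTx']; exact hx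
    have hw' : ContDiffOn ℝ (⊤ : ℕ∞) (fun y => shf (-s) (w (shf s y))) (shf s ⁻¹' Ω) := by
      apply (shf_contDiff (-s)).comp_contDiffOn
      exact hw.comp ((shf_contDiff s).contDiffOn) (fun y hy => hy)
    have hu' : ContDiffOn ℝ 1 (fun z => u (shf s z)) (shf s ⁻¹' Ω) :=
      hu.comp (((shf_contDiff s).of_le (by simp)).contDiffOn) (fun y hy => hy)
    have hw0' : ∀ y ∈ shf s ⁻¹' Ω, (fun y => shf (-s) (w (shf s y))) y ≠ 0 := by
      intro y hy h
      exact hw0 _ hy (shf_eq_zero h)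
    have hgrad : ∀ y, y ∈ shf s ⁻¹' Ω →
        grad3 (fun z => u (shf s z)) y = shf (-s) (grad3 u (shf s y)) := by
      intro y hy
      funext m
      show pd m (fun z => u (shf s z)) y = grad3 u (shf s y) (m + -s)
      rw [pd_shf s m u y (hud _ hy), ← sub_eq_add_neg]
      rfl
    have hcross' : ∀ y ∈ shf s ⁻¹' Ω,
        cross3 ((fun y => shf (-s) (w (shf s y))) y) (grad3 (fun z => u (shf s z)) y) = 0 := by
      intro y hy
      show cross3 (shf (-s) (w (shf s y))) (grad3 (fun z => u (shf s z)) y) = 0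
      rw [hgrad y hy, cross3_shf, hcross _ hy]
      funext j; simp [shf]
    have hu2' : pd 2 (fun z => u (shf s z)) (shf (-s) x) ≠ 0 := by
      have h := pd_shf s 2 u (shf (-s) x) (by rw [hTx']; exact hud x hx)
      rw [hTx'] at h
      have h2 : (2 : Fin 3) - s = i := by rw [hs_def, sub_sub_cancel]
      rw [h, h2]
      exact hne
    have hkey := key (shf s ⁻¹' Ω) hΩ'o _ hw' hw0' _ hu' hcross' (shf (-s) x) hx'Ω hu2'
    have hwx : shf (-s) (w (shf s (shf (-s) x))) = shf (-s) (w x) := by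
      rw [hTx']
    have hc : curl3 (fun y => shf (-s) (w (shf s y))) (shf (-s) x)
        = shf (-s) (curl3 w x) := by
      have h := curl3_shf s w (shf (-s) x) (fun m => by rw [hTx']; exact hwd m x hx)
      rw [hTx'] at h
      exact h
    rw [hwx, hc, dot3_shf] at hkey
    exact hhel x hx hkey
  -- the derivative of u vanishes
  have hfz : ∀ x ∈ Ω, fderiv ℝ u x = 0 := by
    intro x hx
    apply clm_ext3 (T := 0) <;>
      · rw [← pd_eq_fderiv]
        simp [hpd x hx]
  -- local constancy
  have hloc : ∀ y ∈ Ω, ∀ᶠ z in 𝓝 y, u z = u y := by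
    intro y hy
    obtain ⟨ε, hε, hball⟩ := Metric.isOpen_iff.1 hΩ y hy
    have hconst : ∀ z ∈ Metric.ball y ε, u z = u y := by
      intro z hz
      apply Convex.is_const_of_fderivWithin_eq_zero (𝕜 := ℝ) (convex_ball y ε)
      · intro p hp; exact (hud p (hball hp)).differentiableWithinAt
      · intro p hp
        rw [fderivWithin_of_isOpen Metric.isOpen_ball hp]
        exact hfz p (hball hp)
      · exact hz
      · exact Metric.mem_ball_self hε
    filter_upwards [Metric.ball_mem_nhds y hε] with z hz using hconst z hz
  obtain ⟨⟨x₀, hx₀⟩, hpre⟩ := hconn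
  refine ⟨u x₀, fun x hx => ?_⟩
  by_contra hne
  have hAo : IsOpen {y | y ∈ Ω ∧ u y = u x₀} := by
    rw [isOpen_iff_mem_nhds]
    rintro y ⟨hyΩ, hyv⟩
    filter_upwards [hloc y hyΩ, hΩ.eventually_mem hyΩ] with z hz1 hz2
    exact ⟨hz2, by rw [hz1, hyv]⟩
  have hBo : IsOpen {y | y ∈ Ω ∧ u y ≠ u x₀} := by
    rw [isOpen_iff_mem_nhds]
    rintro y ⟨hyΩ, hyv⟩
    filter_upwards [hloc y hyΩ, hΩ.eventually_mem hyΩ] with z hz1 hz2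
    exact ⟨hz2, by rw [hz1]; exact hyv⟩
  have hsub : Ω ⊆ {y | y ∈ Ω ∧ u y = u x₀} ∪ {y | y ∈ Ω ∧ u y ≠ u x₀} := by
    intro y hy
    by_cases h : u y = u x₀
    · exact Or.inl ⟨hy, h⟩
    · exact Or.inr ⟨hy, h⟩
  have h1 : (Ω ∩ {y | y ∈ Ω ∧ u y = u x₀}).Nonempty := ⟨x₀, hx₀, hx₀, rfl⟩
  have h2 : (Ω ∩ {y | y ∈ Ω ∧ u y ≠ u x₀}).Nonempty := ⟨x, hx, hx, hne⟩
  obtain ⟨z, hz⟩ := hpre _ _ hAo hBo hsub h1 h2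
  exact hz.2.2.2 hz.2.1.2
end
end

section
/- Poincaré-like inequality via a divergence-controlled orthogonal field: let w be smooth non-vanishing on Ω̄ with w·n = 0 on ∂Ω, and let a⊥ ∈ C¹(Ω̄) satisfy a⊥·w = 0, inf_Ω |∇·a⊥| = ε > 0, sup_Ω |a⊥| = ν. Then for every u ∈ C¹(Ω̄) with u = 0 on ∂Ω, ‖∇⊥u‖_{L²(Ω)} ≥ (ε/(2ν)) ‖u‖_{L²(Ω)}. -/
open MeasureTheory Real Set

noncomputable section

/-- `Ω` is a smoothly bounded domain described by a defining function `F`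
(`Ω = {F < 0}`, `∂Ω = {F = 0}`, `∇F ≠ 0` on `∂Ω`) and the vector field `w` is
tangent to the boundary: `w·n = 0` on `∂Ω` (the outward normal `n` is parallel
to `∇F`). -/
def TangentBC (Ω : Set V3) (w : V3 → V3) : Prop :=
  ∃ F : V3 → ℝ, ContDiff ℝ (⊤ : ℕ∞) F ∧ Ω = {x | F x < 0} ∧
    frontier Ω = {x | F x = 0} ∧
    ∀ x ∈ frontier Ω, grad3 F x ≠ 0 ∧ dot3 (w x) (grad3 F x) = 0



section PoincareAux
open Asymptotics Filter Topology

lemma dot3_comm (p q : V3) : dot3 p q = dot3 q p := by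
  simp [dot3, mul_comm]

lemma dot3_self_nonneg (p : V3) : 0 ≤ dot3 p p :=
  Finset.sum_nonneg fun i _ => mul_self_nonneg _

lemma nrm_nonneg (p : V3) : 0 ≤ nrm p := Real.sqrt_nonneg _

lemma nrm_sq (p : V3) : nrm p ^ 2 = dot3 p p := Real.sq_sqrt (dot3_self_nonneg p)

lemma dot3_self_pos {p : V3} (hp : p ≠ 0) : 0 < dot3 p p := by
  rcases (dot3_self_nonneg p).lt_or_eq with h | h
  · exact h
  · exfalso; apply hp; funext i
    have := (Finset.sum_eq_zero_iff_of_nonneg (fun j _ => mul_self_nonneg (p j))).1 h.symm i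
      (Finset.mem_univ i)
    have := mul_self_eq_zero.1 this
    simpa using this

lemma abs_dot3_le (p q : V3) : |dot3 p q| ≤ nrm p * nrm q := by
  have h := Finset.sum_mul_sq_le_sq_mul_sq Finset.univ p q
  have h2 : dot3 p q ^ 2 ≤ dot3 p p * dot3 q q := by
    simpa [dot3, pow_two] using h
  calc |dot3 p q| = Real.sqrt (dot3 p q ^ 2) := (Real.sqrt_sq_eq_abs _).symm
    _ ≤ Real.sqrt (dot3 p p * dot3 q q) := Real.sqrt_le_sqrt h2
    _ = nrm p * nrm q := by rw [Real.sqrt_mul (dot3_self_nonneg p)]; rfl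

lemma dot3_smul_left (c : ℝ) (v q : V3) : dot3 (c • v) q = c * dot3 v q := by
  simp [dot3, Finset.mul_sum]; ring_nf

lemma triple3 (p g q : V3) :
    dot3 (cross3 p (cross3 g p)) q = dot3 p p * dot3 g q - dot3 g p * dot3 p q := by
  simp [dot3, cross3, Fin.sum_univ_three]
  ring

lemma hatw_unit {w : V3 → V3} {x : V3} (hx : w x ≠ 0) :
    dot3 (hatw w x) (hatw w x) = 1 := by
  have hpos := dot3_self_pos hx
  have : dot3 (hatw w x) (hatw w x) = ((nrm (w x))⁻¹)^2 * dot3 (w x) (w x) := by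
    simp [hatw, dot3_smul_left]
    rw [dot3_comm, dot3_smul_left, dot3_comm]; ring
  rw [this, nrm]
  rw [← Real.sqrt_inv, Real.sq_sqrt (by positivity)]
  field_simp

lemma oGrad_dot3 {w : V3 → V3} {u : V3 → ℝ} {x : V3} {q : V3}
    (hx : w x ≠ 0) (h0 : dot3 q (w x) = 0) :
    dot3 (oGrad w u x) q = dot3 (grad3 u x) q := by
  have h1 : dot3 (hatw w x) q = 0 := by
    rw [hatw, dot3_smul_left, dot3_comm, h0, mul_zero]
  rw [oGrad, triple3, hatw_unit hx, dot3_comm (grad3 u x) (hatw w x), h1]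
  ring

lemma div_formula (u : V3 → ℝ) (a : V3 → V3) (hu : ContDiff ℝ 1 u) (ha : ContDiff ℝ 1 a)
    (x : V3) :
    (∑ i, fderiv ℝ (fun y => (u y)^2 • a y) x (Pi.single i 1) i)
      = (u x)^2 * divg a x + 2 * u x * dot3 (grad3 u x) (a x) := by
  have hud : HasFDerivAt u (fderiv ℝ u x) x := (hu.differentiable one_ne_zero x).hasFDerivAt
  have had : HasFDerivAt a (fderiv ℝ a x) x := (ha.differentiable one_ne_zero x).hasFDerivAt
  have hΦ : HasFDerivAt (fun y => (u y * u y) • a y) ((u x * u x) • fderiv ℝ a x +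
      (u x • fderiv ℝ u x + u x • fderiv ℝ u x).smulRight (a x)) x := (hud.mul hud).smul had
  have heq : (fun y => (u y)^2 • a y) = fun y => (u y * u y) • a y := by
    funext y; rw [pow_two]
  rw [heq, hΦ.fderiv]
  have hproj : ∀ (i : Fin 3), fderiv ℝ (fun y => a y i) x
      = (ContinuousLinearMap.proj (R := ℝ) (φ := fun _ : Fin 3 => ℝ) i).comp (fderiv ℝ a x) :=
    fun i => (((ContinuousLinearMap.proj (R := ℝ) (φ := fun _ : Fin 3 => ℝ) i)).hasFDerivAt.comp x had).fderiv
  have hdiv : divg a x = ∑ i, fderiv ℝ a x (Pi.single i 1) i := by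
    unfold divg pd
    refine Finset.sum_congr rfl fun i _ => ?_
    rw [hproj i]; rfl
  have hgrad : ∀ i, grad3 u x i = fderiv ℝ u x (Pi.single i 1) := fun i => rfl
  simp only [ContinuousLinearMap.add_apply, ContinuousLinearMap.smul_apply,
    ContinuousLinearMap.smulRight_apply, Pi.add_apply, Pi.smul_apply, smul_eq_mul]
  rw [Finset.sum_add_distrib, hdiv]
  unfold dot3
  rw [Finset.mul_sum, Finset.mul_sum]
  congr 1 <;> refine Finset.sum_congr rfl fun i _ => by (try simp only [hgrad]); ring

lemma indicator_deriv_zero {Ω : Set V3} {u : V3 → ℝ} {a : V3 → V3}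
    (hu : ContDiff ℝ 1 u) (ha : ContDiff ℝ 1 a) {x : V3} (hux : u x = 0) :
    HasFDerivAt ((closure Ω).indicator fun y => (u y)^2 • a y) (0 : V3 →L[ℝ] V3) x := by
  rw [hasFDerivAt_iff_isLittleO]
  have hvx : (closure Ω).indicator (fun y => (u y)^2 • a y) x = 0 := by
    by_cases h : x ∈ closure Ω <;> simp [indicator, h, hux]
  simp only [hvx, ContinuousLinearMap.zero_apply, sub_zero]
  have h1 : (fun y => u y) =O[𝓝 x] (fun y => y - x) := by
    have := ((hu.differentiable one_ne_zero x).hasFDerivAt).isBigO_sub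
    simpa [hux] using this
  have h1' : (fun y => u y) =O[𝓝 x] (fun y => ‖y - x‖) := h1.norm_right
  have h2 : (fun y => a y) =O[𝓝 x] (fun _ => (1:ℝ)) :=
    ((ha.continuous).tendsto x).isBigO_one ℝ
  have h3 : (fun y => (u y)^2 • a y) =O[𝓝 x] (fun y => (‖y - x‖ * ‖y - x‖) • (1:ℝ)) := by
    have := (h1'.mul h1').smul h2
    simpa [pow_two] using this
  have h4 : (fun y => (‖y - x‖ * ‖y - x‖) • (1:ℝ)) =o[𝓝 x] (fun y => y - x) := by
    simp only [smul_eq_mul, mul_one]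
    have ht : Tendsto (fun y : V3 => ‖y - x‖) (𝓝 x) (𝓝 0) := by
      have hc : ContinuousAt (fun y : V3 => ‖y - x‖) x :=
        ((continuous_id.sub continuous_const).norm).continuousAt
      simpa using hc.tendsto
    have h5 : (fun y : V3 => ‖y - x‖) =o[𝓝 x] (fun _ => (1:ℝ)) :=
      (Asymptotics.isLittleO_one_iff ℝ).2 ht
    have h6 : (fun y : V3 => ‖y - x‖) =O[𝓝 x] (fun y => ‖y - x‖) :=
      (isBigO_refl (fun y : V3 => y - x) (𝓝 x)).norm_left.norm_right
    have h7 := h5.mul_isBigO h6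
    simp only [one_mul] at h7
    exact h7.of_norm_right
  have h0 : (fun y => (closure Ω).indicator (fun z => (u z)^2 • a z) y)
      =O[𝓝 x] (fun y => (u y)^2 • a y) :=
    Asymptotics.isBigO_of_le _ (fun y => norm_indicator_le_norm_self _ _)
  exact h0.trans_isLittleO (h3.trans_isLittleO h4)

lemma key_integral {Ω : Set V3} (hΩ : IsOpen Ω) (hbdd : Bornology.IsBounded Ω)
    {u : V3 → ℝ} {a : V3 → V3} (hu : ContDiff ℝ 1 u) (ha : ContDiff ℝ 1 a)
    (hubdry : ∀ x ∈ frontier Ω, u x = 0) :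
    ∫ x in Ω, ((u x)^2 * divg a x + 2 * u x * dot3 (grad3 u x) (a x)) = 0 := by
  classical
  set Φ : V3 → V3 := fun y => (u y)^2 • a y with hΦdef
  have hΦ : ContDiff ℝ 1 Φ := (hu.pow 2).smul ha
  set v : V3 → V3 := (closure Ω).indicator Φ with hvdef
  set F' : V3 → (V3 →L[ℝ] V3) := fun x => if x ∈ Ω then fderiv ℝ Φ x else 0 with hF'def
  have hderiv : ∀ x, HasFDerivAt v (F' x) x := by
    intro x
    by_cases hx : x ∈ Ω
    · have hev : v =ᶠ[𝓝 x] Φ :=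
        eventually_of_mem (hΩ.mem_nhds hx) fun y hy => indicator_of_mem (subset_closure hy) Φ
      have hΦd : HasFDerivAt Φ (fderiv ℝ Φ x) x := (hΦ.differentiable one_ne_zero x).hasFDerivAt
      have hFx : F' x = fderiv ℝ Φ x := by simp [hF'def, hx]
      rw [hFx]
      exact hΦd.congr_of_eventuallyEq hev
    · have hF0 : F' x = 0 := by simp [hF'def, hx]
      rw [hF0]
      by_cases hx2 : x ∈ closure Ω
      · have hfr : x ∈ frontier Ω := by
          rw [frontier, hΩ.interior_eq]; exact ⟨hx2, hx⟩
        exact indicator_deriv_zero hu ha (hubdry x hfr)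
      · have hev : v =ᶠ[𝓝 x] fun _ => (0 : V3) :=
          eventually_of_mem (isClosed_closure.isOpen_compl.mem_nhds hx2)
            fun y hy => indicator_of_notMem hy Φ
        exact (hasFDerivAt_const (0 : V3) x).congr_of_eventuallyEq hev
  obtain ⟨R, hR0, hR⟩ := hbdd.subset_closedBall_lt 0 0
  have hclR : closure Ω ⊆ Metric.closedBall 0 R :=
    closure_minimal hR Metric.isClosed_closedBall
  set A : V3 := fun _ => -(R+1) with hAdef
  set B : V3 := fun _ => (R+1) with hBdef
  have hAB : A ≤ B := fun i => by simp only [hAdef, hBdef]; linarith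
  have hnorm : ∀ p ∈ closure Ω, ‖p‖ ≤ R := fun p hp => by
    simpa [mem_closedBall_zero_iff] using hclR hp
  have habs : ∀ (p : V3) (i : Fin 3), p ∈ closure Ω → |p i| ≤ R := by
    intro p i hp
    have h3 := norm_le_pi_norm p i
    rw [Real.norm_eq_abs] at h3
    exact h3.trans (hnorm p hp)
  have hIcc : closure Ω ⊆ Set.Icc A B := by
    intro p hp
    constructor <;> intro i
    · have h1 := (abs_le.1 (habs p i hp)).1
      simp only [hAdef]; linarith
    · have h1 := (abs_le.1 (habs p i hp)).2
      simp only [hBdef]; linarith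
  have hvout : ∀ (i : Fin 3) (c : ℝ), R + 1 ≤ |c| → ∀ y : Fin 2 → ℝ,
      v (i.insertNth c y) = 0 := by
    intro i c hc y
    apply indicator_of_notMem
    intro hmem
    have h2 := habs _ i hmem
    rw [Fin.insertNth_apply_same] at h2
    linarith
  have hcont_v : ContinuousOn v (Set.Icc A B) :=
    (continuous_iff_continuousAt.2 fun x => (hderiv x).continuousAt).continuousOn
  set g0 : V3 → ℝ := fun x => ∑ i, fderiv ℝ Φ x (Pi.single i 1) i with hg0
  have hg0c : Continuous g0 := by
    refine continuous_finset_sum _ fun i _ => ?_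
    have h2 : Continuous fun x => fderiv ℝ Φ x (Pi.single i 1) :=
      (hΦ.continuous_fderiv_apply one_ne_zero).comp (continuous_id.prodMk continuous_const)
    exact (continuous_apply i).comp h2
  have hcompact : IsCompact (closure Ω) := hbdd.isCompact_closure
  have hInt : IntegrableOn g0 Ω :=
    ((hg0c.continuousOn).integrableOn_compact hcompact).mono_set subset_closure
  have hfun : (fun x => ∑ i, F' x (Pi.single i 1) i) = Ω.indicator g0 := by
    funext x; by_cases hx : x ∈ Ω
    · simp [hF'def, hx, indicator_of_mem, hg0]
    · simp [hF'def, hx, indicator_of_notMem]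
  have Hi : IntegrableOn (fun x => ∑ i, F' x (Pi.single i 1) i) (Set.Icc A B) := by
    rw [hfun]
    exact (hInt.integrable_indicator hΩ.measurableSet).integrableOn
  have hDT := MeasureTheory.integral_divergence_of_hasFDerivAt_off_countable
      (a := A) (b := B) hAB v F' ∅ Set.countable_empty hcont_v (fun x _ => hderiv x) Hi
  have h0 : (∫ x in Set.Icc A B, ∑ i, F' x (Pi.single i 1) i) = 0 := by
    rw [hDT]
    apply Finset.sum_eq_zero
    intro i _
    have hB : ∀ y : Fin 2 → ℝ, v (i.insertNth (B i) y) i = 0 := fun y => by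
      rw [hvout i (B i) (by show R + 1 ≤ |(R+1 : ℝ)|; rw [abs_of_pos (by linarith)]) y]; rfl
    have hA : ∀ y : Fin 2 → ℝ, v (i.insertNth (A i) y) i = 0 := fun y => by
      rw [hvout i (A i) (by show R + 1 ≤ |(-(R+1) : ℝ)|; rw [abs_of_neg (by linarith)]; linarith) y]; rfl
    simp only [hA, hB, integral_zero, sub_zero]
  rw [hfun] at h0
  rw [setIntegral_indicator hΩ.measurableSet,
    Set.inter_eq_self_of_subset_right (subset_closure.trans hIcc)] at h0
  rw [← h0]
  exact setIntegral_congr_fun hΩ.measurableSet fun x _ => (div_formula u a hu ha x).symm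

end PoincareAux

open Asymptotics Filter Topology

/-- Poincaré-like inequality via a divergence-controlled orthogonal
field: if `a⊥ ∈ C¹(Ω̄)` satisfies `a⊥·w = 0`, `|∇·a⊥| ≥ ε > 0` and `|a⊥| ≤ ν` on `Ω`,
then `‖∇⊥u‖ ≥ (ε/(2ν))‖u‖` for every `u ∈ C¹(Ω̄)` vanishing on `∂Ω`. -/
theorem poincare_like_inequality
    (Ω : Set V3) (hΩ : IsOpen Ω) (hconn : IsConnected Ω)
    (hbdd : Bornology.IsBounded Ω)
    (w : V3 → V3) (hw : ContDiff ℝ (⊤ : ℕ∞) w) (hw0 : ∀ x ∈ closure Ω, w x ≠ 0)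
    (hbc : TangentBC Ω w)
    (a : V3 → V3) (ha : ContDiff ℝ 1 a)
    (ε ν : ℝ) (hε : 0 < ε) (hν : 0 < ν)
    (haw : ∀ x ∈ Ω, dot3 (a x) (w x) = 0)
    (hdiv : ∀ x ∈ Ω, ε ≤ |divg a x|)
    (hsup : ∀ x ∈ Ω, nrm (a x) ≤ ν)
    (u : V3 → ℝ) (hu : ContDiff ℝ 1 u) (hubdry : ∀ x ∈ frontier Ω, u x = 0) :
    (ε / (2 * ν)) * Real.sqrt (∫ x in Ω, u x ^ 2) ≤
      Real.sqrt (∫ x in Ω, dot3 (oGrad w u x) (oGrad w u x)) := by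
  classical
  have hcompact : IsCompact (closure Ω) := hbdd.isCompact_closure
  set G : V3 → V3 := oGrad w u with hGdef
  set S : V3 → ℝ := divg a with hSdef
  -- continuity facts
  have hcomp_apply : ∀ (i : Fin 3) (f : V3 → V3), ContDiff ℝ 1 f →
      Continuous fun x => f x i := fun i f hf => (continuous_apply i).comp hf.continuous
  have hpd_cont : ∀ (f : V3 → ℝ), ContDiff ℝ 1 f → ∀ i, Continuous (pd i f) := by
    intro f hf i
    exact (hf.continuous_fderiv_apply one_ne_zero).comp (continuous_id.prodMk continuous_const)
  have hgradc : Continuous (grad3 u) :=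
    continuous_pi fun i => hpd_cont u hu i
  have hSc : Continuous S := by
    refine continuous_finset_sum _ fun i _ => ?_
    exact hpd_cont (fun y => a y i) ((ContinuousLinearMap.proj (R := ℝ)
      (φ := fun _ : Fin 3 => ℝ) i).contDiff.comp ha) i
  have hdotc : ∀ (f g : V3 → V3) (s : Set V3), ContinuousOn f s → ContinuousOn g s →
      ContinuousOn (fun x => dot3 (f x) (g x)) s := by
    intro f g s hf hg
    have hfi : ∀ i, ContinuousOn (fun x => f x i) s :=
      fun i => (continuous_apply i).comp_continuousOn hf
    have hgi : ∀ i, ContinuousOn (fun x => g x i) s :=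
      fun i => (continuous_apply i).comp_continuousOn hg
    unfold dot3
    exact continuousOn_finset_sum _ fun i _ => (hfi i).mul (hgi i)
  have hcrossc : ∀ (f g : V3 → V3) (s : Set V3), ContinuousOn f s → ContinuousOn g s →
      ContinuousOn (fun x => cross3 (f x) (g x)) s := by
    intro f g s hf hg
    have hfi : ∀ i, ContinuousOn (fun x => f x i) s :=
      fun i => (continuous_apply i).comp_continuousOn hf
    have hgi : ∀ i, ContinuousOn (fun x => g x i) s :=
      fun i => (continuous_apply i).comp_continuousOn hg
    rw [continuousOn_pi]
    intro i
    fin_cases i <;> simp only [cross3, Matrix.cons_val_zero, Matrix.cons_val_one,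
      Matrix.head_cons, Matrix.cons_val_two, Matrix.tail_cons, Fin.isValue] <;>
      exact ((hfi _).mul (hgi _)).sub ((hfi _).mul (hgi _))
  have hnrmc : ∀ (f : V3 → V3) (s : Set V3), ContinuousOn f s →
      ContinuousOn (fun x => nrm (f x)) s := by
    intro f s hf
    exact Real.continuous_sqrt.comp_continuousOn (hdotc f f s hf hf)
  have hhatc : ContinuousOn (hatw w) (closure Ω) := by
    have hnw : ContinuousOn (fun x => nrm (w x)) (closure Ω) :=
      hnrmc w _ hw.continuous.continuousOn
    have hne : ∀ x ∈ closure Ω, nrm (w x) ≠ 0 := by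
      intro x hx
      have := dot3_self_pos (hw0 x hx)
      simp only [nrm]
      positivity
    exact (hnw.inv₀ hne).smul hw.continuous.continuousOn
  have hGc : ContinuousOn G (closure Ω) := by
    exact hcrossc _ _ _ hhatc (hcrossc _ _ _ hgradc.continuousOn hhatc)
  have hnrmGc : ContinuousOn (fun x => nrm (G x)) (closure Ω) := hnrmc G _ hGc
  -- integrability
  have hintOn : ∀ (f : V3 → ℝ), ContinuousOn f (closure Ω) → IntegrableOn f Ω := by
    intro f hf
    exact (hf.integrableOn_compact hcompact).mono_set subset_closure
  have hIu2 : IntegrableOn (fun x => u x ^ 2) Ω :=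
    hintOn _ ((hu.continuous.pow 2).continuousOn)
  have hIu2S : IntegrableOn (fun x => u x ^ 2 * S x) Ω :=
    hintOn _ (((hu.continuous.pow 2).mul hSc).continuousOn)
  have hIB : IntegrableOn (fun x => 2 * u x * dot3 (grad3 u x) (a x)) Ω :=
    hintOn _ (((continuous_const.mul hu.continuous).continuousOn).mul
      (hdotc _ _ _ hgradc.continuousOn ha.continuous.continuousOn))
  have hIT : IntegrableOn (fun x => u x * dot3 (G x) (a x)) Ω :=
    hintOn _ ((hu.continuous.continuousOn).mul
      (hdotc _ _ _ hGc ha.continuous.continuousOn))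
  have hIabs : IntegrableOn (fun x => |u x| * nrm (G x)) Ω :=
    hintOn _ ((hu.continuous.abs.continuousOn).mul hnrmGc)
  -- the divergence identity
  have hkey := key_integral hΩ hbdd hu ha hubdry
  have hsplit : (∫ x in Ω, u x ^ 2 * S x)
      = - ∫ x in Ω, 2 * u x * dot3 (grad3 u x) (a x) := by
    have hadd := integral_add hIu2S hIB
    rw [← hadd] at *
    have : (∫ x in Ω, (u x ^ 2 * S x + 2 * u x * dot3 (grad3 u x) (a x))) = 0 := hkey
    rw [integral_add hIu2S hIB] at this
    linarith
  set T : ℝ := ∫ x in Ω, u x * dot3 (G x) (a x) with hTdef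
  have hBT : (∫ x in Ω, 2 * u x * dot3 (grad3 u x) (a x)) = 2 * T := by
    rw [hTdef, ← integral_const_mul]
    refine setIntegral_congr_fun hΩ.measurableSet fun x hx => ?_
    rw [oGrad_dot3 (hw0 x (subset_closure hx)) (haw x hx)]
    ring
  set X : ℝ := ∫ x in Ω, u x ^ 2 with hXdef
  set Y : ℝ := ∫ x in Ω, dot3 (G x) (G x) with hYdef
  have hX0 : 0 ≤ X := setIntegral_nonneg hΩ.measurableSet fun x _ => sq_nonneg _
  have hY0 : 0 ≤ Y := setIntegral_nonneg hΩ.measurableSet fun x _ => dot3_self_nonneg _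
  -- sign dichotomy
  have hdich : (∀ x ∈ Ω, ε ≤ S x) ∨ (∀ x ∈ Ω, S x ≤ -ε) := by
    have hP : IsOpen {x | 0 < S x} := isOpen_lt continuous_const hSc
    have hN : IsOpen {x | S x < 0} := isOpen_lt hSc continuous_const
    have hdisj : Disjoint {x | 0 < S x} {x | S x < 0} := by
      rw [Set.disjoint_left]
      intro x h1 h2
      have h1' : 0 < S x := h1
      have h2' : S x < 0 := h2
      linarith
    have hsub : Ω ⊆ {x | 0 < S x} ∪ {x | S x < 0} := by
      intro x hx
      rcases lt_trichotomy (S x) 0 with h | h | h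
      · exact Or.inr h
      · exfalso; have h1 := hdiv x hx; rw [h] at h1; simp at h1; linarith
      · exact Or.inl h
    rcases hconn.isPreconnected.subset_or_subset hP hN hdisj hsub with h | h
    · left; intro x hx
      have h1 := hdiv x hx
      have h2 : 0 < S x := h hx
      rwa [abs_of_pos h2] at h1
    · right; intro x hx
      have h1 := hdiv x hx
      have h2 : S x < 0 := h hx
      rw [abs_of_neg h2] at h1
      linarith
  -- ε X ≤ 2 |T|
  have hmain : ε * X ≤ 2 * |T| := by
    rcases hdich with hpos | hneg
    · have h1 : ∫ x in Ω, ε * u x ^ 2 ≤ ∫ x in Ω, u x ^ 2 * S x := by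
        refine setIntegral_mono_on (hIu2.const_mul ε) hIu2S hΩ.measurableSet fun x hx => ?_
        have := hpos x hx
        nlinarith [sq_nonneg (u x)]
      rw [integral_const_mul] at h1
      have h2 : (∫ x in Ω, u x ^ 2 * S x) = -(2*T) := by rw [hsplit, hBT]
      calc ε * X ≤ ∫ x in Ω, u x ^ 2 * S x := h1
        _ = -(2*T) := h2
        _ ≤ 2 * |T| := by linarith [neg_le_abs T]
    · have h1 : ∫ x in Ω, ε * u x ^ 2 ≤ ∫ x in Ω, -(u x ^ 2 * S x) := by
        refine setIntegral_mono_on (hIu2.const_mul ε) hIu2S.neg hΩ.measurableSet fun x hx => ?_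
        have := hneg x hx
        nlinarith [sq_nonneg (u x)]
      rw [integral_const_mul, integral_neg] at h1
      have h2 : -(∫ x in Ω, u x ^ 2 * S x) = 2*T := by rw [hsplit, hBT]; ring
      calc ε * X ≤ -(∫ x in Ω, u x ^ 2 * S x) := h1
        _ = 2*T := h2
        _ ≤ 2 * |T| := by nlinarith [le_abs_self T]
  -- |T| ≤ ν ∫ |u| nrm G
  have hTbound : |T| ≤ ν * ∫ x in Ω, |u x| * nrm (G x) := by
    have h1 : |T| ≤ ∫ x in Ω, |u x * dot3 (G x) (a x)| := by
      rw [hTdef]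
      have := norm_integral_le_integral_norm (μ := volume.restrict Ω)
        (f := fun x => u x * dot3 (G x) (a x))
      simpa only [Real.norm_eq_abs] using this
    have h2 : (∫ x in Ω, |u x * dot3 (G x) (a x)|) ≤ ∫ x in Ω, ν * (|u x| * nrm (G x)) := by
      refine setIntegral_mono_on hIT.abs ((hIabs.const_mul ν)) hΩ.measurableSet fun x hx => ?_
      rw [abs_mul]
      have h3 : |dot3 (G x) (a x)| ≤ nrm (G x) * nrm (a x) := abs_dot3_le _ _
      have h4 : nrm (a x) ≤ ν := hsup x hx
      have h5 : 0 ≤ |u x| := abs_nonneg _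
      have h6 : 0 ≤ nrm (G x) := nrm_nonneg _
      calc |u x| * |dot3 (G x) (a x)| ≤ |u x| * (nrm (G x) * nrm (a x)) :=
            mul_le_mul_of_nonneg_left h3 h5
        _ ≤ |u x| * (nrm (G x) * ν) :=
            mul_le_mul_of_nonneg_left (mul_le_mul_of_nonneg_left h4 h6) h5
        _ = ν * (|u x| * nrm (G x)) := by ring
    rw [integral_const_mul] at h2
    linarith
  -- Cauchy-Schwarz
  haveI hfin : IsFiniteMeasure (volume.restrict Ω) := by
    constructor
    rw [Measure.restrict_apply_univ]
    exact lt_of_le_of_lt (measure_mono subset_closure) hcompact.measure_lt_top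
  have hCS : (∫ x in Ω, |u x| * nrm (G x)) ≤ Real.sqrt X * Real.sqrt Y := by
    have hconj : Real.HolderConjugate 2 2 := Real.HolderConjugate.two_two
    obtain ⟨C1, hC1⟩ := hcompact.exists_bound_of_continuousOn hu.continuous.abs.continuousOn
    obtain ⟨C2, hC2⟩ := hcompact.exists_bound_of_continuousOn hnrmGc
    have hf : MemLp (fun x => |u x|) (ENNReal.ofReal 2) (volume.restrict Ω) := by
      refine MemLp.of_bound hu.continuous.abs.aestronglyMeasurable.restrict C1 ?_
      exact (ae_restrict_iff' hΩ.measurableSet).2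
        (ae_of_all _ fun x hx => hC1 x (subset_closure hx))
    have hg : MemLp (fun x => nrm (G x)) (ENNReal.ofReal 2) (volume.restrict Ω) := by
      refine MemLp.of_bound ((hnrmGc.mono subset_closure).aestronglyMeasurable
        hΩ.measurableSet) C2 ?_
      exact (ae_restrict_iff' hΩ.measurableSet).2
        (ae_of_all _ fun x hx => hC2 x (subset_closure hx))
    have hH := integral_mul_le_Lp_mul_Lq_of_nonneg hconj
      (ae_of_all _ fun x => abs_nonneg (u x)) (ae_of_all _ fun x => nrm_nonneg (G x)) hf hg
    have hr2 : ∀ r : ℝ, r ^ (2:ℝ) = r ^ 2 := fun r => by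
      rw [show (2:ℝ) = ((2:ℕ):ℝ) by norm_num, Real.rpow_natCast]
    have he1 : (∫ x in Ω, |u x| ^ (2:ℝ)) = X := by
      rw [hXdef]
      refine integral_congr_ae (ae_of_all _ fun x => ?_)
      show |u x| ^ (2:ℝ) = u x ^ 2
      rw [hr2, sq_abs]
    have he2 : (∫ x in Ω, nrm (G x) ^ (2:ℝ)) = Y := by
      rw [hYdef]
      refine integral_congr_ae (ae_of_all _ fun x => ?_)
      show nrm (G x) ^ (2:ℝ) = dot3 (G x) (G x)
      rw [hr2, nrm_sq]
    rw [he1, he2] at hH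
    calc (∫ x in Ω, |u x| * nrm (G x)) ≤ X ^ (1/(2:ℝ)) * Y ^ (1/(2:ℝ)) := hH
      _ = Real.sqrt X * Real.sqrt Y := by rw [← Real.sqrt_eq_rpow, ← Real.sqrt_eq_rpow]
  -- combine
  have hfinal : ε * X ≤ 2 * ν * (Real.sqrt X * Real.sqrt Y) := by
    have h1 : 0 ≤ ∫ x in Ω, |u x| * nrm (G x) :=
      setIntegral_nonneg hΩ.measurableSet fun x _ => mul_nonneg (abs_nonneg _) (nrm_nonneg _)
    nlinarith
  rw [div_mul_eq_mul_div, div_le_iff₀ (by positivity : (0:ℝ) < 2 * ν)]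
  rcases eq_or_lt_of_le (Real.sqrt_nonneg X) with h | h
  · rw [← h]
    have := Real.sqrt_nonneg Y
    nlinarith
  · have hXX : X = Real.sqrt X * Real.sqrt X := (Real.mul_self_sqrt hX0).symm
    rw [hXX] at hfinal
    have := Real.sqrt_nonneg Y
    nlinarith
end
end
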